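/- Let T = (Φ,B,η,h) be a stochastic transformation from M to M', and define T⁻¹ = (Φ⁻¹, (B∘Φ⁻¹)⁻¹, (η∘Φ⁻¹)⁻¹, −((1/√η)·B·h)∘Φ⁻¹), a stochastic transformation from M' to M. Then, with respect to the composition law T₂∘T₁ = (Φ₂∘Φ₁, (B₂∘Φ₁)·B₁, (η₂∘Φ₁)·η₁, √η₁·B₁⁻¹·(h₂∘Φ₁) + h₁), one has T∘T⁻¹ = (id_{M'}, I, 1, 0) and T⁻¹∘T = (id_M, I, 1, 0); consequently E_{T⁻¹}(E_T(μ,σ)) = (μ,σ) for every SDE (μ,σ) on M. -/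

import Mathlib

open Matrix

/-- Partial derivative `∂ᵢ f` of a scalar function on `ℝⁿ`. -/
noncomputable def pd {n : ℕ} (i : Fin n) (f : (Fin n → ℝ) → ℝ) (x : Fin n → ℝ) : ℝ :=
  fderiv ℝ f x (Pi.single i 1)

/-- Action `Y(f) = Yⁱ ∂ᵢ f` of a vector field on a scalar function. -/
noncomputable def vfd {n : ℕ} (Y : (Fin n → ℝ) → Fin n → ℝ)
    (f : (Fin n → ℝ) → ℝ) (x : Fin n → ℝ) : ℝ :=
  ∑ j, Y x j * pd j f x

/-- Infinitesimal generator `L(f) = ½ (σσᵀ)^{ij} ∂ᵢ∂ⱼ f + μⁱ ∂ᵢ f` of the SDE `(μ,σ)`. -/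
noncomputable def gen {n m : ℕ} (μ : (Fin n → ℝ) → Fin n → ℝ)
    (σ : (Fin n → ℝ) → Matrix (Fin n) (Fin m) ℝ)
    (f : (Fin n → ℝ) → ℝ) (x : Fin n → ℝ) : ℝ :=
  (1 / 2) * ∑ i, ∑ j, (∑ α, σ x i α * σ x j α) * pd i (pd j f) x
    + ∑ i, μ x i * pd i f x

/-- Entrywise smoothness of a vector-valued function on a set. -/
def SmoothVec {n k : ℕ} (M : Set (Fin n → ℝ)) (f : (Fin n → ℝ) → Fin k → ℝ) : Prop :=
  ∀ i, ContDiffOn ℝ (⊤ : ℕ∞) (fun x => f x i) M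

/-- Entrywise smoothness of a matrix-valued function on a set. -/
def SmoothMat {n k l : ℕ} (M : Set (Fin n → ℝ))
    (f : (Fin n → ℝ) → Matrix (Fin k) (Fin l) ℝ) : Prop :=
  ∀ i j, ContDiffOn ℝ (⊤ : ℕ∞) (fun x => f x i j) M

/-- The drift of the transformed SDE `E_T(μ,σ)`:
`E_T(μ) = ((1/η)[L(Φ) + ∇Φ·σ·h]) ∘ Φ⁻¹`, where `Ψ = Φ⁻¹`. -/
noncomputable def ETmu {n m : ℕ} (Φ Ψ : (Fin n → ℝ) → Fin n → ℝ)
    (η : (Fin n → ℝ) → ℝ) (h : (Fin n → ℝ) → Fin m → ℝ)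
    (μ : (Fin n → ℝ) → Fin n → ℝ) (σ : (Fin n → ℝ) → Matrix (Fin n) (Fin m) ℝ)
    (y : Fin n → ℝ) : Fin n → ℝ := fun i =>
  (η (Ψ y))⁻¹ * (gen μ σ (fun z => Φ z i) (Ψ y)
    + ∑ j, ∑ α, pd j (fun z => Φ z i) (Ψ y) * σ (Ψ y) j α * h (Ψ y) α)

/-- The diffusion coefficient of the transformed SDE `E_T(μ,σ)`:
`E_T(σ) = ((1/√η)·∇Φ·σ·B⁻¹) ∘ Φ⁻¹`, where `Ψ = Φ⁻¹`. -/
noncomputable def ETsigma {n m : ℕ} (Φ Ψ : (Fin n → ℝ) → Fin n → ℝ)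
    (B : (Fin n → ℝ) → Matrix (Fin m) (Fin m) ℝ) (η : (Fin n → ℝ) → ℝ)
    (σ : (Fin n → ℝ) → Matrix (Fin n) (Fin m) ℝ)
    (y : Fin n → ℝ) : Matrix (Fin n) (Fin m) ℝ :=
  Matrix.of fun i α =>
    (Real.sqrt (η (Ψ y)))⁻¹ *
      ∑ j, ∑ β, pd j (fun z => Φ z i) (Ψ y) * σ (Ψ y) j β * (B (Ψ y))⁻¹ β α

/-! The group-law identities are pointwise matrix algebra, with `B` orthogonal and `η > 0`.
For the SDEs, the second-order chain rule gives the transformation law of generators,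
`L_{E_T(μ,σ)}(f) ∘ Φ = (1/η) (L(f ∘ Φ) + ∇(f ∘ Φ)·σ·h)`. For `T⁻¹` take `f = Ψⁱ`: as `Ψⁱ ∘ Φ` is
the `i`-th coordinate near `x`, the right side is `(1/η) (μⁱ + (σh)ⁱ)`. The factor `1/η` is undone
by the factor `η` that `T⁻¹` puts in front of its drift, and `(σh)ⁱ` is cancelled by the drift
correction `−(1/η)·σ·h` that `T⁻¹` produces. The diffusion part only needs
`∇Ψ(Φ x) · ∇Φ(x) = 1`. -/

open Filter Topology

section Calculus

variable {n : ℕ}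

noncomputable def grad (f : (Fin n → ℝ) → ℝ) (x : Fin n → ℝ) : Fin n → ℝ :=
  fun j => pd j f x

noncomputable def jac (Φ : (Fin n → ℝ) → Fin n → ℝ) (x : Fin n → ℝ) :
    Matrix (Fin n) (Fin n) ℝ :=
  Matrix.of fun i j => pd j (fun z => Φ z i) x

noncomputable def hess (f : (Fin n → ℝ) → ℝ) (x : Fin n → ℝ) : Matrix (Fin n) (Fin n) ℝ :=
  Matrix.of fun i j => pd i (pd j f) x

lemma pd_congr_of_eventuallyEq {f g : (Fin n → ℝ) → ℝ} {x : Fin n → ℝ} (hfg : f =ᶠ[𝓝 x] g)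
    (j : Fin n) : pd j f x = pd j g x := by
  rw [pd, pd, hfg.fderiv_eq]

lemma pd_eventuallyEq {f g : (Fin n → ℝ) → ℝ} {x : Fin n → ℝ} (hfg : f =ᶠ[𝓝 x] g)
    (j : Fin n) : pd j f =ᶠ[𝓝 x] pd j g :=
  hfg.eventuallyEq_nhds.mono fun _ hy => pd_congr_of_eventuallyEq hy j

lemma grad_congr_of_eventuallyEq {f g : (Fin n → ℝ) → ℝ} {x : Fin n → ℝ}
    (hfg : f =ᶠ[𝓝 x] g) : grad f x = grad g x :=
  funext (pd_congr_of_eventuallyEq hfg)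

lemma hess_congr_of_eventuallyEq {f g : (Fin n → ℝ) → ℝ} {x : Fin n → ℝ}
    (hfg : f =ᶠ[𝓝 x] g) : hess f x = hess g x :=
  Matrix.ext fun i j => pd_congr_of_eventuallyEq (pd_eventuallyEq hfg j) i

lemma jac_congr_of_eventuallyEq {Φ Ψ : (Fin n → ℝ) → Fin n → ℝ} {x : Fin n → ℝ}
    (hΦΨ : Φ =ᶠ[𝓝 x] Ψ) : jac Φ x = jac Ψ x :=
  Matrix.ext fun i j => pd_congr_of_eventuallyEq (hΦΨ.fun_comp (· i)) j

lemma pd_coord (i j : Fin n) (x : Fin n → ℝ) :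
    pd j (fun z : Fin n → ℝ => z i) x = (Pi.single i 1 : Fin n → ℝ) j := by
  rw [pd, show (fun z : Fin n → ℝ => z i) = ContinuousLinearMap.proj (R := ℝ) i from rfl,
    ContinuousLinearMap.fderiv]
  simp [Pi.single_apply, eq_comm]

lemma grad_coord (i : Fin n) (x : Fin n → ℝ) : grad (fun z => z i) x = Pi.single i 1 :=
  funext (pd_coord i · x)

lemma hess_coord (i : Fin n) (x : Fin n → ℝ) : hess (fun z => z i) x = 0 := by
  ext j k
  simp [hess, funext (pd_coord i k), pd]

lemma jac_id (x : Fin n → ℝ) : jac id x = 1 := by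
  ext i j
  simp [jac, pd_coord, Matrix.one_apply, Pi.single_apply, eq_comm]

lemma pd_sum {ι : Type*} {s : Finset ι} {F : ι → (Fin n → ℝ) → ℝ} {x : Fin n → ℝ}
    (hF : ∀ p ∈ s, DifferentiableAt ℝ (F p) x) (j : Fin n) :
    pd j (fun z => ∑ p ∈ s, F p z) x = ∑ p ∈ s, pd j (F p) x := by
  simp [pd, fderiv_fun_sum hF]

lemma pd_mul {a b : (Fin n → ℝ) → ℝ} {x : Fin n → ℝ} (ha : DifferentiableAt ℝ a x)
    (hb : DifferentiableAt ℝ b x) (j : Fin n) :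
    pd j (fun z => a z * b z) x = pd j a x * b x + a x * pd j b x := by
  simp only [pd, fderiv_fun_mul ha hb, _root_.add_apply,
    _root_.smul_apply, smul_eq_mul]
  ring

lemma pd_comp {f : (Fin n → ℝ) → ℝ} {Φ : (Fin n → ℝ) → Fin n → ℝ} {x : Fin n → ℝ}
    (hf : DifferentiableAt ℝ f (Φ x)) (hΦ : DifferentiableAt ℝ Φ x) (k : Fin n) :
    pd k (fun z => f (Φ z)) x = ∑ j, pd j f (Φ x) * pd k (fun z => Φ z j) x := by
  simp only [pd, fderiv_fun_comp x hf hΦ, fderiv_apply hΦ, ContinuousLinearMap.comp_apply]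
  rw [← ContinuousLinearMap.coe_coe, LinearMap.pi_apply_eq_sum_univ]
  refine Finset.sum_congr rfl fun j _ => ?_
  rw [smul_eq_mul, mul_comm]
  congr 2
  ext l
  simp [Pi.single_apply, eq_comm]

lemma grad_comp {f : (Fin n → ℝ) → ℝ} {Φ : (Fin n → ℝ) → Fin n → ℝ} {x : Fin n → ℝ}
    (hf : DifferentiableAt ℝ f (Φ x)) (hΦ : DifferentiableAt ℝ Φ x) :
    grad (fun z => f (Φ z)) x = grad f (Φ x) ᵥ* jac Φ x :=
  funext (pd_comp hf hΦ)

lemma jac_comp {Ψ Φ : (Fin n → ℝ) → Fin n → ℝ} {x : Fin n → ℝ}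
    (hΨ : DifferentiableAt ℝ Ψ (Φ x)) (hΦ : DifferentiableAt ℝ Φ x) :
    jac (fun z => Ψ (Φ z)) x = jac Ψ (Φ x) * jac Φ x := by
  ext i k
  simp only [jac, Matrix.of_apply, Matrix.mul_apply]
  exact pd_comp (differentiableAt_pi.1 hΨ i) hΦ k

lemma ContDiffAt.differentiableAt_pd {f : (Fin n → ℝ) → ℝ} {x : Fin n → ℝ}
    (hf : ContDiffAt ℝ 2 f x) (j : Fin n) : DifferentiableAt ℝ (pd j f) x :=
  ((hf.fderiv_right (m := 1) (by norm_num)).differentiableAt one_ne_zero).clm_apply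
    (differentiableAt_const _)

lemma hess_comp {f : (Fin n → ℝ) → ℝ} {Φ : (Fin n → ℝ) → Fin n → ℝ} {x : Fin n → ℝ}
    (hf : ContDiffAt ℝ 2 f (Φ x)) (hΦ : ContDiffAt ℝ 2 Φ x) :
    hess (fun z => f (Φ z)) x
      = (jac Φ x)ᵀ * hess f (Φ x) * jac Φ x + ∑ p, grad f (Φ x) p • hess (fun z => Φ z p) x := by
  have hdiff : ∀ᶠ z in 𝓝 x, DifferentiableAt ℝ f (Φ z) ∧ DifferentiableAt ℝ Φ z :=
    (hΦ.continuousAt.eventually ((hf.eventually (by simp)).mono fun _ h =>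
      h.differentiableAt two_ne_zero)).and
      ((hΦ.eventually (by simp)).mono fun _ h => h.differentiableAt two_ne_zero)
  have hΦp : ∀ p, ContDiffAt ℝ 2 (fun z => Φ z p) x := contDiffAt_pi.1 hΦ
  have hgradf : ∀ p, DifferentiableAt ℝ (fun z => pd p f (Φ z)) x := fun p =>
    (hf.differentiableAt_pd p).comp x (hΦ.differentiableAt two_ne_zero)
  ext i j
  have hchain : pd j (fun z => f (Φ z)) =ᶠ[𝓝 x]
      fun z => ∑ p, pd p f (Φ z) * pd j (fun z => Φ z p) z :=
    hdiff.mono fun z hz => pd_comp hz.1 hz.2 j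
  rw [hess, Matrix.of_apply, pd_congr_of_eventuallyEq hchain i,
    pd_sum (F := fun p z => pd p f (Φ z) * pd j (fun z => Φ z p) z)
      fun p _ => (hgradf p).mul ((hΦp p).differentiableAt_pd j)]
  simp only [Matrix.add_apply, Matrix.mul_apply, Matrix.transpose_apply, Matrix.sum_apply,
    Matrix.smul_apply, smul_eq_mul, ← Finset.sum_add_distrib]
  refine Finset.sum_congr rfl fun p _ => ?_
  rw [pd_mul (hgradf p) ((hΦp p).differentiableAt_pd j),
    pd_comp (hf.differentiableAt_pd p) (hΦ.differentiableAt two_ne_zero)]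
  simp only [jac, hess, grad, Matrix.of_apply, mul_comm]

end Calculus

section Generator

variable {n m : ℕ} (μ : (Fin n → ℝ) → Fin n → ℝ) (σ : (Fin n → ℝ) → Matrix (Fin n) (Fin m) ℝ)

lemma gen_eq (f : (Fin n → ℝ) → ℝ) (x : Fin n → ℝ) :
    gen μ σ f x = 1 / 2 * (σ x * (σ x)ᵀ * (hess f x)ᵀ).trace + μ x ⬝ᵥ grad f x := by
  simp [gen, Matrix.trace, Matrix.mul_apply, hess, grad, dotProduct]

lemma gen_congr_of_eventuallyEq {f g : (Fin n → ℝ) → ℝ} {x : Fin n → ℝ}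
    (hfg : f =ᶠ[𝓝 x] g) : gen μ σ f x = gen μ σ g x := by
  rw [gen_eq, gen_eq, hess_congr_of_eventuallyEq hfg, grad_congr_of_eventuallyEq hfg]

lemma gen_coord (i : Fin n) (x : Fin n → ℝ) : gen μ σ (fun z => z i) x = μ x i := by
  simp [gen_eq, hess_coord, grad_coord]

lemma gen_comp {f : (Fin n → ℝ) → ℝ} {Φ : (Fin n → ℝ) → Fin n → ℝ} {x : Fin n → ℝ}
    (hf : ContDiffAt ℝ 2 f (Φ x)) (hΦ : ContDiffAt ℝ 2 Φ x) :
    gen μ σ (fun z => f (Φ z)) x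
      = 1 / 2 * (jac Φ x * (σ x * (σ x)ᵀ) * (jac Φ x)ᵀ * (hess f (Φ x))ᵀ).trace
        + (fun p => gen μ σ (fun z => Φ z p) x) ⬝ᵥ grad f (Φ x) := by
  have hhess : (σ x * (σ x)ᵀ * ((jac Φ x)ᵀ * hess f (Φ x) * jac Φ x)ᵀ).trace
      = (jac Φ x * (σ x * (σ x)ᵀ) * (jac Φ x)ᵀ * (hess f (Φ x))ᵀ).trace := by
    rw [show σ x * (σ x)ᵀ * ((jac Φ x)ᵀ * hess f (Φ x) * jac Φ x)ᵀ
        = σ x * (σ x)ᵀ * (jac Φ x)ᵀ * (hess f (Φ x))ᵀ * jac Φ x by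
          simp [Matrix.transpose_mul, Matrix.mul_assoc], Matrix.trace_mul_comm]
    simp only [Matrix.mul_assoc]
  have hdrift : μ x ⬝ᵥ (grad f (Φ x) ᵥ* jac Φ x)
      = ∑ p, μ x ⬝ᵥ grad (fun z => Φ z p) x * grad f (Φ x) p := by
    rw [dotProduct_comm, ← dotProduct_mulVec]
    simp only [dotProduct, mulVec, grad, jac, Matrix.of_apply, mul_comm]
  simp only [gen_eq, hess_comp hf hΦ, grad_comp (hf.differentiableAt two_ne_zero)
    (hΦ.differentiableAt two_ne_zero), Matrix.transpose_add, Matrix.transpose_sum,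
    Matrix.transpose_smul, Matrix.mul_add, Matrix.mul_sum, Matrix.mul_smul, Matrix.trace_add,
    Matrix.trace_sum, Matrix.trace_smul, hhess, hdrift]
  rw [mul_add, add_assoc, Finset.mul_sum, ← Finset.sum_add_distrib]
  simp only [dotProduct]
  congr 1
  exact Finset.sum_congr rfl fun p _ => by ring

end Generator

section Transformation

variable {n m : ℕ} (μ : (Fin n → ℝ) → Fin n → ℝ) (σ : (Fin n → ℝ) → Matrix (Fin n) (Fin m) ℝ)
  (Φ Ψ : (Fin n → ℝ) → Fin n → ℝ) (B : (Fin n → ℝ) → Matrix (Fin m) (Fin m) ℝ)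
  (η : (Fin n → ℝ) → ℝ) (h : (Fin n → ℝ) → Fin m → ℝ)

lemma ETsigma_eq (y : Fin n → ℝ) :
    ETsigma Φ Ψ B η σ y = (√(η (Ψ y)))⁻¹ • (jac Φ (Ψ y) * σ (Ψ y) * (B (Ψ y))⁻¹) := by
  ext i α
  simp only [ETsigma, jac, Matrix.of_apply, Matrix.smul_apply, Matrix.mul_apply, smul_eq_mul,
    Finset.sum_mul]
  rw [Finset.sum_comm]

lemma ETmu_eq (y : Fin n → ℝ) :
    ETmu Φ Ψ η h μ σ y = (η (Ψ y))⁻¹ • ((fun i => gen μ σ (fun z => Φ z i) (Ψ y))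
      + (jac Φ (Ψ y) * σ (Ψ y)) *ᵥ h (Ψ y)) := by
  ext i
  simp only [ETmu, jac, Pi.smul_apply, Pi.add_apply, Matrix.mulVec, dotProduct, Matrix.mul_apply,
    Matrix.of_apply, smul_eq_mul, Finset.sum_mul]
  rw [Finset.sum_comm]

variable {μ σ Φ Ψ B η h}

lemma ETsigma_mul_transpose {x : Fin n → ℝ} (hΨΦ : Ψ (Φ x) = x) (hB : B x * (B x)ᵀ = 1)
    (hη : 0 < η x) :
    ETsigma Φ Ψ B η σ (Φ x) * (ETsigma Φ Ψ B η σ (Φ x))ᵀ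
      = (η x)⁻¹ • (jac Φ x * (σ x * (σ x)ᵀ) * (jac Φ x)ᵀ) := by
  rw [ETsigma_eq, hΨΦ, Matrix.inv_eq_right_inv hB]
  simp only [Matrix.transpose_smul, Matrix.transpose_mul, Matrix.transpose_transpose,
    Matrix.smul_mul, Matrix.mul_smul, smul_smul, Matrix.mul_assoc]
  rw [← Matrix.mul_assoc (B x)ᵀ, mul_eq_one_comm.mp hB, Matrix.one_mul, ← mul_inv,
    Real.mul_self_sqrt hη.le]

lemma gen_ETmu_ETsigma {f : (Fin n → ℝ) → ℝ} {x : Fin n → ℝ} (hf : ContDiffAt ℝ 2 f (Φ x))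
    (hΦ : ContDiffAt ℝ 2 Φ x) (hΨΦ : Ψ (Φ x) = x) (hB : B x * (B x)ᵀ = 1) (hη : 0 < η x) :
    gen (ETmu Φ Ψ η h μ σ) (ETsigma Φ Ψ B η σ) f (Φ x)
      = (η x)⁻¹ * (gen μ σ (fun z => f (Φ z)) x + grad (fun z => f (Φ z)) x ⬝ᵥ (σ x *ᵥ h x)) := by
  have hgirsanov : grad (fun z => f (Φ z)) x ⬝ᵥ (σ x *ᵥ h x)
      = (jac Φ x * σ x) *ᵥ h x ⬝ᵥ grad f (Φ x) := by
    rw [grad_comp (hf.differentiableAt two_ne_zero) (hΦ.differentiableAt two_ne_zero),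
      ← dotProduct_mulVec, Matrix.mulVec_mulVec, dotProduct_comm]
  rw [gen_eq, ETsigma_mul_transpose hΨΦ hB hη, ETmu_eq, hΨΦ, gen_comp μ σ hf hΦ, hgirsanov,
    Matrix.smul_mul, Matrix.trace_smul, smul_dotProduct, add_dotProduct, smul_eq_mul, smul_eq_mul]
  ring

end Transformation

section Inverse

variable {n m : ℕ} {μ : (Fin n → ℝ) → Fin n → ℝ} {σ : (Fin n → ℝ) → Matrix (Fin n) (Fin m) ℝ}
  {Φ Ψ : (Fin n → ℝ) → Fin n → ℝ} {B : (Fin n → ℝ) → Matrix (Fin m) (Fin m) ℝ}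
  {η : (Fin n → ℝ) → ℝ} {h : (Fin n → ℝ) → Fin m → ℝ} {x : Fin n → ℝ}

lemma jac_mul_jac_of_eventuallyEq_id (hΨ : DifferentiableAt ℝ Ψ (Φ x))
    (hΦ : DifferentiableAt ℝ Φ x) (hΨΦ : (fun z => Ψ (Φ z)) =ᶠ[𝓝 x] id) :
    jac Ψ (Φ x) * jac Φ x = 1 := by
  rw [← jac_comp hΨ hΦ, jac_congr_of_eventuallyEq hΨΦ, jac_id]

lemma ETsigma_inverse_ETsigma (hΨ : DifferentiableAt ℝ Ψ (Φ x)) (hΦ : DifferentiableAt ℝ Φ x)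
    (hΨΦ : (fun z => Ψ (Φ z)) =ᶠ[𝓝 x] id) (hB : IsUnit (B x).det) (hη : 0 < η x) :
    ETsigma Ψ Φ (fun y => (B (Ψ y))⁻¹) (fun y => (η (Ψ y))⁻¹) (ETsigma Φ Ψ B η σ) x = σ x := by
  have hsqrt : √(η x) ≠ 0 := (Real.sqrt_pos.2 hη).ne'
  rw [ETsigma_eq, ETsigma_eq, hΨΦ.eq_of_nhds, id, Real.sqrt_inv, inv_inv,
    Matrix.nonsing_inv_nonsing_inv _ hB, Matrix.mul_smul, Matrix.smul_mul, smul_smul,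
    mul_inv_cancel₀ hsqrt, one_smul, ← Matrix.mul_assoc, ← Matrix.mul_assoc,
    jac_mul_jac_of_eventuallyEq_id hΨ hΦ hΨΦ, Matrix.one_mul, Matrix.mul_assoc,
    Matrix.nonsing_inv_mul _ hB, Matrix.mul_one]

lemma ETmu_inverse_ETmu (hΨ : ContDiffAt ℝ 2 Ψ (Φ x)) (hΦ : ContDiffAt ℝ 2 Φ x)
    (hΨΦ : (fun z => Ψ (Φ z)) =ᶠ[𝓝 x] id) (hB : B x * (B x)ᵀ = 1) (hη : 0 < η x) :
    ETmu Ψ Φ (fun y => (η (Ψ y))⁻¹) (fun y => -((√(η (Ψ y)))⁻¹ • (B (Ψ y) *ᵥ h (Ψ y))))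
      (ETmu Φ Ψ η h μ σ) (ETsigma Φ Ψ B η σ) x = μ x := by
  have hx : Ψ (Φ x) = x := hΨΦ.eq_of_nhds
  have hKJ := jac_mul_jac_of_eventuallyEq_id (hΨ.differentiableAt two_ne_zero)
    (hΦ.differentiableAt two_ne_zero) hΨΦ
  have hsqrt : (√(η x))⁻¹ * (√(η x))⁻¹ = (η x)⁻¹ := by rw [← mul_inv, Real.mul_self_sqrt hη.le]
  have hgirsanov : (jac Ψ (Φ x) * ETsigma Φ Ψ B η σ (Φ x)) *ᵥ -((√(η x))⁻¹ • (B x *ᵥ h x))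
      = -((η x)⁻¹ • (σ x *ᵥ h x)) := by
    rw [ETsigma_eq, hx, Matrix.mul_smul, Matrix.smul_mulVec, Matrix.mulVec_neg, Matrix.mulVec_smul,
      smul_neg, smul_smul, hsqrt, Matrix.mulVec_mulVec, Matrix.mul_assoc, Matrix.mul_assoc,
      Matrix.nonsing_inv_mul _ (Matrix.isUnit_det_of_right_inverse hB), Matrix.mul_one,
      ← Matrix.mul_assoc, hKJ, Matrix.one_mul]
  ext i
  have hcoord : (fun z => Ψ (Φ z) i) =ᶠ[𝓝 x] fun z => z i := hΨΦ.fun_comp (· i)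
  rw [ETmu_eq, hx, inv_inv, Pi.smul_apply, Pi.add_apply, hgirsanov,
    gen_ETmu_ETsigma (contDiffAt_pi.1 hΨ i) hΦ hx hB hη, gen_congr_of_eventuallyEq μ σ hcoord,
    grad_congr_of_eventuallyEq hcoord, gen_coord, grad_coord, single_dotProduct]
  simp only [Pi.neg_apply, Pi.smul_apply, smul_eq_mul]
  field_simp
  ring

end Inverse

lemma SmoothVec.contDiffAt {n k : ℕ} {U : Set (Fin n → ℝ)} {F : (Fin n → ℝ) → Fin k → ℝ}
    (hF : SmoothVec U F) (hU : IsOpen U) {x : Fin n → ℝ} (hx : x ∈ U) : ContDiffAt ℝ 2 F x :=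
  contDiffAt_pi.2 fun i => ((hF i).contDiffAt (hU.mem_nhds hx)).of_le (by norm_cast)

section Cancel

variable {ι : Type*} [Fintype ι] [DecidableEq ι] {A : Matrix ι ι ℝ} {e : ℝ}

lemma sqrt_smul_inv_mulVec_neg_add_cancel (hA : IsUnit A.det) (he : 0 < e) (v : ι → ℝ) :
    √e • (A⁻¹ *ᵥ -((√e)⁻¹ • (A *ᵥ v))) + v = 0 := by
  rw [Matrix.mulVec_neg, Matrix.mulVec_smul, Matrix.mulVec_mulVec, Matrix.nonsing_inv_mul _ hA,
    Matrix.one_mulVec, smul_neg, smul_smul, mul_inv_cancel₀ (Real.sqrt_pos.2 he).ne', one_smul,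
    neg_add_cancel]

lemma sqrt_inv_smul_inv_inv_mulVec_add_neg_cancel (hA : IsUnit A.det) (v : ι → ℝ) :
    √e⁻¹ • (A⁻¹⁻¹ *ᵥ v) + -((√e)⁻¹ • (A *ᵥ v)) = 0 := by
  rw [Matrix.nonsing_inv_nonsing_inv _ hA, Real.sqrt_inv, add_neg_cancel]

end Cancel

theorem statement3_general {n m : ℕ}
    (M M' : Set (Fin n → ℝ)) (hM : IsOpen M) (hM' : IsOpen M')
    (μ : (Fin n → ℝ) → Fin n → ℝ) (σ : (Fin n → ℝ) → Matrix (Fin n) (Fin m) ℝ)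
    -- T = (Φ, B, η, h) is a stochastic transformation from M to M', with Ψ = Φ⁻¹
    (Φ Ψ : (Fin n → ℝ) → Fin n → ℝ)
    (B : (Fin n → ℝ) → Matrix (Fin m) (Fin m) ℝ)
    (η : (Fin n → ℝ) → ℝ) (h : (Fin n → ℝ) → Fin m → ℝ)
    (hΦmap : Set.MapsTo Φ M M') (hΨmap : Set.MapsTo Ψ M' M)
    (hΦinv : ∀ x ∈ M, Ψ (Φ x) = x) (hΨinv : ∀ y ∈ M', Φ (Ψ y) = y)
    (hΦs : SmoothVec M Φ) (hΨs : SmoothVec M' Ψ)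
    (hSO : ∀ x ∈ M, B x * (B x)ᵀ = 1 ∧ (B x).det = 1) (hpos : ∀ x ∈ M, 0 < η x) :
    -- `T⁻¹∘T = (id_M, I, 1, 0)` on `M`
    (∀ x ∈ M,
      Ψ (Φ x) = x ∧
      (B (Ψ (Φ x)))⁻¹ * B x = 1 ∧
      (η (Ψ (Φ x)))⁻¹ * η x = 1 ∧
      Real.sqrt (η x) •
          ((B x)⁻¹ *ᵥ (-((Real.sqrt (η (Ψ (Φ x))))⁻¹ • (B (Ψ (Φ x)) *ᵥ h (Ψ (Φ x))))))
        + h x = 0) ∧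
    -- `T∘T⁻¹ = (id_{M'}, I, 1, 0)` on `M'`
    (∀ y ∈ M',
      Φ (Ψ y) = y ∧
      B (Ψ y) * (B (Ψ y))⁻¹ = 1 ∧
      η (Ψ y) * (η (Ψ y))⁻¹ = 1 ∧
      Real.sqrt ((η (Ψ y))⁻¹) • (((B (Ψ y))⁻¹)⁻¹ *ᵥ h (Ψ y))
        + -((Real.sqrt (η (Ψ y)))⁻¹ • (B (Ψ y) *ᵥ h (Ψ y))) = 0) ∧
    -- `E_{T⁻¹}(E_T(μ,σ)) = (μ,σ)` on `M`
    (∀ x ∈ M,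
      (∀ i, ETmu Ψ Φ (fun y => (η (Ψ y))⁻¹)
          (fun y => -((Real.sqrt (η (Ψ y)))⁻¹ • (B (Ψ y) *ᵥ h (Ψ y))))
          (ETmu Φ Ψ η h μ σ) (ETsigma Φ Ψ B η σ) x i = μ x i) ∧
      (∀ i α, ETsigma Ψ Φ (fun y => (B (Ψ y))⁻¹) (fun y => (η (Ψ y))⁻¹)
          (ETsigma Φ Ψ B η σ) x i α = σ x i α)) := by
  have hBunit : ∀ x ∈ M, IsUnit (B x).det := fun x hx =>
    Matrix.isUnit_det_of_right_inverse (hSO x hx).1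
  refine ⟨fun x hx => ?_, fun y hy => ?_, fun x hx => ?_⟩
  · rw [hΦinv x hx]
    exact ⟨rfl, Matrix.nonsing_inv_mul _ (hBunit x hx), inv_mul_cancel₀ (hpos x hx).ne',
      sqrt_smul_inv_mulVec_neg_add_cancel (hBunit x hx) (hpos x hx) _⟩
  · exact ⟨hΨinv y hy, Matrix.mul_nonsing_inv _ (hBunit _ (hΨmap hy)),
      mul_inv_cancel₀ (hpos _ (hΨmap hy)).ne',
      sqrt_inv_smul_inv_inv_mulVec_add_neg_cancel (hBunit _ (hΨmap hy)) _⟩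
  · have hΨΦ : (fun z => Ψ (Φ z)) =ᶠ[𝓝 x] id := eventually_of_mem (hM.mem_nhds hx) hΦinv
    have hΦx : ContDiffAt ℝ 2 Φ x := hΦs.contDiffAt hM hx
    have hΨx : ContDiffAt ℝ 2 Ψ (Φ x) := hΨs.contDiffAt hM' (hΦmap hx)
    exact ⟨congrFun (ETmu_inverse_ETmu hΨx hΦx hΨΦ (hSO x hx).1 (hpos x hx)),
      congrFun₂ (ETsigma_inverse_ETsigma (hΨx.differentiableAt two_ne_zero)
        (hΦx.differentiableAt two_ne_zero) hΨΦ (hBunit x hx) (hpos x hx))⟩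

/-- The inverse of a stochastic transformation:
`T⁻¹ = (Φ⁻¹, (B∘Φ⁻¹)⁻¹, (η∘Φ⁻¹)⁻¹, −((1/√η)·B·h)∘Φ⁻¹)` satisfies `T∘T⁻¹ = (id_{M'}, I, 1, 0)`,
`T⁻¹∘T = (id_M, I, 1, 0)` (componentwise, with respect to the composition law of stochastic
transformations) and `E_{T⁻¹}(E_T(μ,σ)) = (μ,σ)`. -/
theorem statement3 {n m : ℕ}
    (M M' : Set (Fin n → ℝ)) (hM : IsOpen M) (hM' : IsOpen M')
    (μ : (Fin n → ℝ) → Fin n → ℝ) (σ : (Fin n → ℝ) → Matrix (Fin n) (Fin m) ℝ)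
    (hμ : SmoothVec M μ) (hσ : SmoothMat M σ)
    -- T = (Φ, B, η, h) is a stochastic transformation from M to M', with Ψ = Φ⁻¹
    (Φ Ψ : (Fin n → ℝ) → Fin n → ℝ)
    (B : (Fin n → ℝ) → Matrix (Fin m) (Fin m) ℝ)
    (η : (Fin n → ℝ) → ℝ) (h : (Fin n → ℝ) → Fin m → ℝ)
    (hΦmap : Set.MapsTo Φ M M') (hΨmap : Set.MapsTo Ψ M' M)
    (hΦinv : ∀ x ∈ M, Ψ (Φ x) = x) (hΨinv : ∀ y ∈ M', Φ (Ψ y) = y)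
    (hΦs : SmoothVec M Φ) (hΨs : SmoothVec M' Ψ)
    (hBs : SmoothMat M B) (hηs : ContDiffOn ℝ (⊤ : ℕ∞) η M) (hhs : SmoothVec M h)
    (hSO : ∀ x ∈ M, B x * (B x)ᵀ = 1 ∧ (B x).det = 1) (hpos : ∀ x ∈ M, 0 < η x) :
    -- `T⁻¹∘T = (id_M, I, 1, 0)` on `M`
    (∀ x ∈ M,
      Ψ (Φ x) = x ∧
      (B (Ψ (Φ x)))⁻¹ * B x = 1 ∧
      (η (Ψ (Φ x)))⁻¹ * η x = 1 ∧
      Real.sqrt (η x) •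
          ((B x)⁻¹ *ᵥ (-((Real.sqrt (η (Ψ (Φ x))))⁻¹ • (B (Ψ (Φ x)) *ᵥ h (Ψ (Φ x))))))
        + h x = 0) ∧
    -- `T∘T⁻¹ = (id_{M'}, I, 1, 0)` on `M'`
    (∀ y ∈ M',
      Φ (Ψ y) = y ∧
      B (Ψ y) * (B (Ψ y))⁻¹ = 1 ∧
      η (Ψ y) * (η (Ψ y))⁻¹ = 1 ∧
      Real.sqrt ((η (Ψ y))⁻¹) • (((B (Ψ y))⁻¹)⁻¹ *ᵥ h (Ψ y))
        + -((Real.sqrt (η (Ψ y)))⁻¹ • (B (Ψ y) *ᵥ h (Ψ y))) = 0) ∧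
    -- `E_{T⁻¹}(E_T(μ,σ)) = (μ,σ)` on `M`
    (∀ x ∈ M,
      (∀ i, ETmu Ψ Φ (fun y => (η (Ψ y))⁻¹)
          (fun y => -((Real.sqrt (η (Ψ y)))⁻¹ • (B (Ψ y) *ᵥ h (Ψ y))))
          (ETmu Φ Ψ η h μ σ) (ETsigma Φ Ψ B η σ) x i = μ x i) ∧
      (∀ i α, ETsigma Ψ Φ (fun y => (B (Ψ y))⁻¹) (fun y => (η (Ψ y))⁻¹)
          (ETsigma Φ Ψ B η σ) x i α = σ x i α)) :=
  statement3_general M M' hM hM' μ σ Φ Ψ B η h hΦmap hΨmap hΦinv hΨinv hΦs hΨs hSO hpos
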